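/- arXiv:2310.20179 — 2 statements merged into one kernel-verified Lean document; each statement's English description precedes it below -/
import Mathlib

section
/- Let s ≥ 2 be an integer, q = 2^s, m ≥ 3 an odd integer, and n = q^m − 1. Then the minimum distances of the codes C_{(q,m;0)} and C_{(q,m;1)} are equal, and d(C_{(q,m;0)}) = d(C_{(q,m;1)}) ≥ q^{(m−1)/2} + 2q − 1. -/
open Finset

/-- The `q`-weight of a nonnegative integer: the sum of its base-`q` digits. -/
def qWeight (q i : ℕ) : ℕ := (Nat.digits q i).sum

/-- The set `T_{(q,m;j)} = {i : 1 ≤ i ≤ q^m − 2, wt_q(i) ≡ j (mod 2)}`. -/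
def Tset (q m j : ℕ) : Set ℕ :=
  {i | 1 ≤ i ∧ i ≤ q ^ m - 2 ∧ qWeight q i % 2 = j}

/-- The cyclic code of length `n` over `F` with defining set `T` with respect to `β ∈ E`:
all words `(c_0, …, c_{n-1})` with `∑_j c_j β^{k j} = 0` for every `k ∈ T`. -/
def cyclicCode (F E : Type*) [Field F] [Field E] [Algebra F E]
    (n : ℕ) (β : E) (T : Set ℕ) : Submodule F (Fin n → F) where
  carrier := {c | ∀ k ∈ T, ∑ j : Fin n, algebraMap F E (c j) * β ^ (k * (j : ℕ)) = 0}
  add_mem' := by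
    intro a b ha hb k hk
    simp only [Set.mem_setOf_eq, Pi.add_apply, map_add, add_mul] at *
    rw [Finset.sum_add_distrib, ha k hk, hb k hk, add_zero]
  zero_mem' := by
    intro k hk
    simp
  smul_mem' := by
    intro r c hc k hk
    simp only [Set.mem_setOf_eq, Pi.smul_apply, smul_eq_mul, map_mul, mul_assoc] at *
    rw [← Finset.mul_sum, hc k hk, mul_zero]

/-- The minimum distance of a code: the least Hamming weight of a nonzero codeword. -/
noncomputable def minDist {F : Type*} [Field F] [DecidableEq F] {n : ℕ}
    (C : Submodule F (Fin n → F)) : ℕ :=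
  sInf {w | ∃ c ∈ C, c ≠ 0 ∧ hammingNorm c = w}

/-!
Reversing a word, `c_j ↦ c_{-j}`, turns the defining exponent `k` into `n - k = q^m - 1 - k`,
whose `q`-weight is `m(q - 1) - wt_q(k)`. Since `m(q - 1)` is odd this swaps `T_{(q,m;0)}` and
`T_{(q,m;1)}`, so the two codes are permutation equivalent.

For the bound write `m = 2h + 1` and `u = q^h + 1`, which is coprime to `n`. The exponents
`A + r u` with `A = q^h (2q^h - q) + q^h - q + 1` and `r < q^h + 2q - 2` all have even `q`-weight:
in base `q^h` they have two digits `a, b` with `wt_q(a) ≡ wt_q(b) (mod 2)`. The BCH bound for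
consecutive powers of `β^u` then gives `d(C_{(q,m;0)}) ≥ q^h + 2q - 1`.
-/

section QWeight

variable {q : ℕ}

lemma qWeight_of_lt {b : ℕ} (hb : b < q) : qWeight q b = b := by
  rcases Nat.eq_zero_or_pos b with rfl | hb0
  · simp [qWeight]
  · simp [qWeight, Nat.digits_of_lt q b hb0.ne' hb]

lemma qWeight_pow_mul_add (hq : 1 < q) {e b : ℕ} (a : ℕ) (hb : b < q ^ e) :
    qWeight q (q ^ e * a + b) = qWeight q a + qWeight q b := by
  rcases Nat.eq_zero_or_pos a with rfl | ha
  · simp [qWeight]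
  have hlen : (Nat.digits q b).length ≤ e := (Nat.digits_length_le_iff hq b).2 hb
  have key := Nat.digits_append_zeroes_append_digits (k := e - (Nat.digits q b).length)
    (n := b) hq ha
  rw [Nat.add_sub_cancel' hlen] at key
  simp only [qWeight, add_comm (q ^ e * a), ← key, List.sum_append, List.sum_replicate,
    smul_zero]
  ring

lemma qWeight_mul_add (hq : 1 < q) (a : ℕ) {b : ℕ} (hb : b < q) :
    qWeight q (q * a + b) = qWeight q a + b := by
  have := qWeight_pow_mul_add hq a (e := 1) (by rwa [pow_one])
  rwa [pow_one, qWeight_of_lt hb] at this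

lemma qWeight_add_qWeight_pow_sub_one_sub (hq : 1 < q) (m : ℕ) {k : ℕ} (hk : k < q ^ m) :
    qWeight q k + qWeight q (q ^ m - 1 - k) = m * (q - 1) := by
  induction m generalizing k with
  | zero => simp_all [qWeight]
  | succ m ih =>
    obtain ⟨a, b, hb, rfl⟩ : ∃ a b, b < q ∧ k = q * a + b :=
      ⟨k / q, k % q, Nat.mod_lt _ (by omega), (Nat.div_add_mod k q).symm⟩
    have ha : a < q ^ m := by
      by_contra! h
      have := Nat.mul_le_mul_left q h
      rw [pow_succ] at hk
      nlinarith
    have hcompl : q ^ (m + 1) - 1 - (q * a + b) = q * (q ^ m - 1 - a) + (q - 1 - b) := by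
      have h1 : q * (a + 1) ≤ q * q ^ m := Nat.mul_le_mul_left q ha
      have h2 : q * (q ^ m - 1 - a) = q * q ^ m - q * (a + 1) := by
        rw [← Nat.mul_sub, Nat.sub_sub, add_comm 1 a]
      rw [pow_succ', h2, mul_add, mul_one] at *
      omega
    rw [hcompl, qWeight_mul_add hq _ hb, qWeight_mul_add hq _ (by omega), add_mul, one_mul,
      ← ih ha]
    omega

end QWeight

lemma even_qWeight_progression {q h r : ℕ} (hq : 4 ≤ q) (hh : 1 ≤ h)
    (hr : r < q ^ h + 2 * q - 2) :
    Even (qWeight q (q ^ h * (2 * q ^ h - q) + (q ^ h - q + 1) + r * (q ^ h + 1))) := by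
  have hwt : ∀ a {b}, b < q ^ h → qWeight q (q ^ h * a + b) = qWeight q a + qWeight q b :=
    fun a b hb => qWeight_pow_mul_add (by omega) a hb
  have hdvd : q ∣ q ^ h := dvd_pow_self q (by omega)
  have hle : q ≤ q ^ h := Nat.le_of_dvd (by positivity) hdvd
  generalize q ^ h = T at *
  obtain ⟨t, rfl⟩ : ∃ t, T = q + t := ⟨T - q, by omega⟩
  rw [show 2 * (q + t) - q = q + 2 * t by omega, Nat.add_sub_cancel_left]
  suffices ∃ a b, b < q + t ∧ qWeight q a % 2 = qWeight q b % 2 ∧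
      (q + t) * (q + 2 * t) + (t + 1) + r * (q + t + 1) = (q + t) * a + b by
    obtain ⟨a, b, hb, hab, hk⟩ := this
    rw [hk, hwt a hb, Nat.even_iff]
    omega
  rcases lt_or_ge (r + 1) q with h1 | h1
  · obtain ⟨d, hd⟩ : q ∣ t := (Nat.dvd_add_right (dvd_refl q)).1 hdvd
    refine ⟨q + t + (t + r), t + r + 1, by omega, ?_, by ring⟩
    have := hwt 1 (b := t + r) (by omega)
    rw [mul_one, qWeight_of_lt (by omega : 1 < q)] at this
    rw [this, hd, add_assoc, qWeight_mul_add (by omega) d (by omega : r < q),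
      qWeight_mul_add (by omega) d (by omega : r + 1 < q)]
    omega
  obtain ⟨w, hw⟩ : ∃ w, r + 1 = q + w := ⟨r + 1 - q, by omega⟩
  rcases lt_or_ge w (q + t) with h2 | h2
  · refine ⟨2 * (q + t) + w, w, h2, ?_, by linear_combination (q + t + 1) * hw⟩
    rw [mul_comm, hwt 2 h2, qWeight_of_lt (by omega : 2 < q)]
    omega
  · obtain ⟨i, rfl⟩ : ∃ i, w = q + t + i := ⟨w - (q + t), by omega⟩
    refine ⟨3 * (q + t) + (i + 1), i, by omega, ?_, by linear_combination (q + t + 1) * hw⟩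
    rw [mul_comm, hwt 3 (by omega), qWeight_of_lt (by omega : 3 < q),
      qWeight_of_lt (by omega : i + 1 < q), qWeight_of_lt (by omega : i < q)]
    omega

lemma progression_add_two_le {q T r : ℕ} (hq : 4 ≤ q) (hqT : q ≤ T) (hr : r < T + 2 * q - 2) :
    T * (2 * T - q) + (T - q + 1) + r * (T + 1) + 2 ≤ T * T * q := by
  obtain ⟨t, rfl⟩ : ∃ t, T = q + t := ⟨T - q, by omega⟩
  obtain ⟨p, rfl⟩ : ∃ p, q = p + 4 := ⟨q - 4, by omega⟩
  have hr' : r * (p + t + 5) ≤ (3 * p + t + 9) * (p + t + 5) := Nat.mul_le_mul_right _ (by omega)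
  rw [show 2 * (p + 4 + t) - (p + 4) = p + 4 + 2 * t by omega, Nat.add_sub_cancel_left]
  nlinarith

lemma progression_mem_Tset_zero {q h r : ℕ} (hq : 4 ≤ q) (hh : 1 ≤ h)
    (hr : r < q ^ h + 2 * q - 2) :
    q ^ h * (2 * q ^ h - q) + (q ^ h - q + 1) + r * (q ^ h + 1) ∈ Tset q (2 * h + 1) 0 := by
  have hqT : q ≤ q ^ h := by simpa using Nat.pow_le_pow_right (by omega : 0 < q) hh
  have hle := progression_add_two_le hq hqT hr
  refine ⟨by omega, ?_, Nat.even_iff.1 (even_qWeight_progression hq hh hr)⟩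
  rw [show q ^ (2 * h + 1) = q ^ h * q ^ h * q by ring]
  omega

lemma pow_sub_one_sub_mem_Tset {q m j k : ℕ} (hq : Even q) (hq0 : q ≠ 0) (hm : Odd m)
    (hj : j ≤ 1) (hk : k ∈ Tset q m j) : q ^ m - 1 - k ∈ Tset q m (1 - j) := by
  obtain ⟨hk1, hk2, hkw⟩ := hk
  have hsum := qWeight_add_qWeight_pow_sub_one_sub (q := q) (by grind) m (k := k) (by omega)
  have hodd : m * (q - 1) % 2 = 1 :=
    Nat.odd_iff.1 (hm.mul (Nat.Even.sub_odd (by omega) hq odd_one))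
  exact ⟨by omega, by omega, by omega⟩

lemma coprime_pow_add_one_pow_sub_one {q : ℕ} (hq : Even q) (hq0 : q ≠ 0) (h : ℕ) :
    (q ^ h + 1).Coprime (q ^ (2 * h + 1) - 1) := by
  have hpos : 1 ≤ q ^ (2 * h + 1) := Nat.one_le_pow _ _ (Nat.pos_of_ne_zero hq0)
  refine Nat.coprime_of_dvd fun p hp hpu hpn => ?_
  have hu : (q : ZMod p) ^ h = -1 := by
    have := (ZMod.natCast_eq_zero_iff _ p).2 hpu
    push_cast at this
    linear_combination this
  have hn : (q : ZMod p) ^ (2 * h + 1) = 1 := by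
    have := (ZMod.natCast_eq_zero_iff _ p).2 hpn
    push_cast [Nat.cast_sub hpos] at this
    linear_combination this
  have hq1 : (q : ZMod p) = 1 := by
    rw [← hn, pow_succ, pow_mul', hu]
    ring
  have hp2 : p = 2 := by
    have : ((2 : ℕ) : ZMod p) = 0 := by
      rw [hq1, one_pow] at hu
      push_cast
      linear_combination hu
    exact (Nat.prime_dvd_prime_iff_eq hp Nat.prime_two).1 ((ZMod.natCast_eq_zero_iff _ _).1 this)
  subst hp2
  have : Even (q ^ (2 * h + 1)) := Nat.even_pow.2 ⟨hq, by omega⟩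
  rw [← even_iff_two_dvd] at hpn
  exact (Nat.not_even_iff_odd.2 (Nat.Even.sub_odd hpos this odd_one)) hpn

section CyclicCode

variable {F E : Type*} [Field F] [Field E] [Algebra F E] {n : ℕ} {β : E}

lemma one_mem_cyclicCode (hβ : orderOf β = n) {T : Set ℕ} (hT : ∀ k ∈ T, 0 < k ∧ k < n) :
    (1 : Fin n → F) ∈ cyclicCode F E n β T := by
  intro k hk
  have hβk : β ^ k ≠ 1 := fun h =>
    (hT k hk).2.not_ge (hβ ▸ Nat.le_of_dvd (hT k hk).1 (orderOf_dvd_of_pow_eq_one h))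
  simp_rw [Pi.one_apply, map_one, one_mul, pow_mul]
  rw [Fin.sum_univ_eq_sum_range (fun j => (β ^ k) ^ j), geom_sum_eq hβk, ← pow_mul,
    mul_comm, pow_mul, ← hβ, pow_orderOf_eq_one, one_pow, sub_self, zero_div]

lemma comp_neg_mem_cyclicCode [NeZero n] (hβ : orderOf β = n) {T T' : Set ℕ}
    (hT : ∀ k ∈ T', k ≤ n ∧ n - k ∈ T) {c : Fin n → F} (hc : c ∈ cyclicCode F E n β T) :
    c ∘ Neg.neg ∈ cyclicCode F E n β T' := by
  intro k hk
  have hfin : IsOfFinOrder β := orderOf_pos_iff.1 (hβ ▸ Nat.pos_of_neZero n)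
  have hexp : ∀ i : Fin n, β ^ ((n - k) * ((-i : Fin n) : ℕ)) = β ^ (k * (i : ℕ)) := by
    intro i
    rw [hfin.pow_eq_pow_iff_modEq, hβ, ← ZMod.natCast_eq_natCast_iff, Fin.val_neg']
    push_cast [Nat.cast_sub (hT k hk).1, Nat.cast_sub i.2.le, ZMod.natCast_mod]
    simp
  rw [← hc (n - k) (hT k hk).2]
  exact Fintype.sum_equiv (Equiv.neg (Fin n)) _ _ fun i => by simp [hexp]

variable [DecidableEq F]

lemma bch_bound {T : Set ℕ} {A u L : ℕ} (hβ : orderOf β = n) (hu : u.Coprime n)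
    (hT : ∀ r < L, A + r * u ∈ T) {c : Fin n → F} (hc : c ∈ cyclicCode F E n β T)
    (hc0 : c ≠ 0) : L < hammingNorm c := by
  by_contra! hL
  obtain ⟨j₀, hj₀⟩ : ∃ j, c j ≠ 0 := Function.ne_iff.1 hc0
  set S : Finset (Fin n) := {j | c j ≠ 0}
  let e : Fin S.card ≃ S := S.equivFin.symm
  have hβ0 : β ≠ 0 := by
    have : β ^ n = 1 := hβ ▸ pow_orderOf_eq_one β
    rintro rfl
    simp [zero_pow j₀.pos.ne'] at this
  have hγ : orderOf (β ^ u) = n := hβ ▸ Nat.Coprime.orderOf_pow (hβ ▸ hu.symm)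
  have hinj : Function.Injective fun i => (β ^ u) ^ ((e i : Fin n) : ℕ) := by
    intro i i' h
    have := pow_injOn_Iio_orderOf (x := β ^ u) (by simp [hγ]) (by simp [hγ]) h
    exact e.injective (Subtype.ext (Fin.ext this))
  -- the parity checks at `A + r u`, `r < #S`, form a Vandermonde system on the support of `c`
  have hv := Matrix.eq_zero_of_forall_pow_sum_mul_pow_eq_zero hinj
    (v := fun i => algebraMap F E (c (e i)) * β ^ (A * (e i : Fin n))) fun r => by
      rw [← hc (A + r * u) (hT r (r.2.trans_le hL))]
      have hterm : ∀ j : Fin n, algebraMap F E (c j) * β ^ ((A + r * u) * (j : ℕ)) =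
          algebraMap F E (c j) * β ^ (A * (j : ℕ)) * ((β ^ u) ^ (j : ℕ)) ^ (r : ℕ) := fun j => by
        ring
      simp_rw [hterm]
      rw [← Finset.sum_filter_of_ne (p := fun j => c j ≠ 0) fun j _ h => by
        contrapose! h; simp [h], ← Finset.sum_coe_sort S]
      exact e.sum_comp fun j : S => algebraMap F E (c j) * β ^ (A * (j : ℕ)) *
        ((β ^ u) ^ (j : ℕ)) ^ (r : ℕ)
  have := congrFun hv (e.symm ⟨j₀, by simpa [S] using hj₀⟩)
  simp only [Pi.zero_apply, Equiv.apply_symm_apply, mul_eq_zero,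
    FaithfulSMul.algebraMap_eq_zero_iff, pow_eq_zero_iff', hβ0, false_and, or_false] at this
  exact hj₀ this

lemma minDist_eq_of_comp_perm {C C' : Submodule F (Fin n → F)} (σ : Equiv.Perm (Fin n))
    (h : ∀ c ∈ C, c ∘ σ ∈ C') (h' : ∀ c ∈ C', c ∘ σ ∈ C) : minDist C = minDist C' := by
  have hsub : ∀ {D D' : Submodule F (Fin n → F)}, (∀ c ∈ D, c ∘ σ ∈ D') →
      {w | ∃ c ∈ D, c ≠ 0 ∧ hammingNorm c = w} ⊆ {w | ∃ c ∈ D', c ≠ 0 ∧ hammingNorm c = w} := by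
    rintro D D' hD _ ⟨c, hc, hc0, rfl⟩
    refine ⟨c ∘ σ, hD c hc, fun h0 => hc0 ?_, Finset.card_equiv σ fun i => by simp⟩
    ext i
    simpa using congrFun h0 (σ.symm i)
  exact congrArg sInf ((hsub h).antisymm (hsub h'))

lemma le_minDist {C : Submodule F (Fin n → F)} {d : ℕ} (hC : ∃ c ∈ C, c ≠ 0)
    (h : ∀ c ∈ C, c ≠ 0 → d ≤ hammingNorm c) : d ≤ minDist C := by
  obtain ⟨c, hc, hc0⟩ := hC
  exact le_csInf ⟨_, c, hc, hc0, rfl⟩ fun _ ⟨c, hc, hc0, hw⟩ => hw ▸ h c hc hc0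

end CyclicCode

theorem stmt10_general (s q m n : ℕ) (hs : 2 ≤ s) (hq : q = 2 ^ s)
    (hm : 3 ≤ m) (hmodd : Odd m) (hn : n = q ^ m - 1)
    (F E : Type*) [Field F] [DecidableEq F] [Field E] [Algebra F E]
    (β : E) (hβ : orderOf β = n) :
    minDist (cyclicCode F E n β (Tset q m 0)) = minDist (cyclicCode F E n β (Tset q m 1)) ∧
      q ^ ((m - 1) / 2) + 2 * q - 1 ≤ minDist (cyclicCode F E n β (Tset q m 0)) := by
  obtain ⟨h, rfl⟩ := hmodd
  have hq4 : 4 ≤ q := hq ▸ Nat.pow_le_pow_right two_pos hs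
  have hqeven : Even q := hq ▸ Nat.even_pow.2 ⟨even_two, by omega⟩
  have hqm : 4 ≤ q ^ (2 * h + 1) := le_self_pow₀ (by omega) (by omega) |>.trans' hq4
  have : NeZero n := ⟨by omega⟩
  have hreflect : ∀ j ≤ 1, ∀ k ∈ Tset q (2 * h + 1) j,
      k ≤ n ∧ n - k ∈ Tset q (2 * h + 1) (1 - j) :=
    fun j hj k hk => ⟨by have := hk.2.1; omega,
      hn ▸ pow_sub_one_sub_mem_Tset hqeven (by omega) (odd_two_mul_add_one h) hj hk⟩
  refine ⟨minDist_eq_of_comp_perm (Equiv.neg (Fin n))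
    (fun c hc => comp_neg_mem_cyclicCode hβ (hreflect 1 le_rfl) hc)
    (fun c hc => comp_neg_mem_cyclicCode hβ (hreflect 0 zero_le_one) hc), ?_⟩
  rw [show (2 * h + 1 - 1) / 2 = h by omega]
  refine le_minDist ⟨1, one_mem_cyclicCode hβ fun k hk => ⟨hk.1, by have := hk.2.1; omega⟩,
    one_ne_zero⟩ fun c hc hc0 => ?_
  have := bch_bound hβ (hn ▸ coprime_pow_add_one_pow_sub_one hqeven (by omega) h)
    (fun r hr => progression_mem_Tset_zero hq4 (by omega) hr) hc hc0
  omega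

theorem stmt10 (s q m n : ℕ) (hs : 2 ≤ s) (hq : q = 2 ^ s)
    (hm : 3 ≤ m) (hmodd : Odd m) (hn : n = q ^ m - 1)
    (F E : Type*) [Field F] [Fintype F] [DecidableEq F] [Field E] [Fintype E] [Algebra F E]
    (hF : Fintype.card F = q) (hE : Fintype.card E = q ^ m)
    (β : E) (hβ : orderOf β = n) :
    minDist (cyclicCode F E n β (Tset q m 0)) = minDist (cyclicCode F E n β (Tset q m 1)) ∧
      q ^ ((m - 1) / 2) + 2 * q - 1 ≤ minDist (cyclicCode F E n β (Tset q m 0)) :=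
  stmt10_general s q m n hs hq hm hmodd hn F E β hβ
end

section
/- Let s ≥ 1 be an integer, q = 2^s, m ≥ 3 an odd integer, and n = q^m − 1. Then for each i ∈ {0,1}, the extended code of C_{(q,m;i)}, namely the subspace {(c_0,…,c_{n−1}, −Σ_{j=0}^{n−1} c_j) : (c_0,…,c_{n−1}) ∈ C_{(q,m;i)}} of F^{n+1}, is self-dual: it equals its own dual with respect to the standard bilinear form ⟨u,v⟩ = Σ_k u_k v_k on F^{n+1}. -/
/-!
Write `ĉ(k) = ∑ⱼ cⱼ β^{kj}` for the Mattson–Solomon transform of a word `c`. Since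
`wt_q(k) + wt_q(n - k) = m(q - 1)` is odd, exactly one of `k` and `n - k` lies in the defining
set `T` when `0 < k < n`. Parseval's identity `n ⟨c, c'⟩ = ∑ₖ ĉ(k) ĉ'(n - k)` therefore
collapses to its term `k = 0` on the code, and as `n = -1` in `F` it reads
`⟨c, c'⟩ = -(∑ c)(∑ c')`: this is the self-orthogonality of the extended code.

Conversely, multiplication by `q` modulo `n` rotates base-`q` digits, so `T` is stable under it,
and for `l ∈ T ∪ {0}` and `x ∈ E` the word `(Tr(x β^{li}))ᵢ` then lies in the code. A word `u`
orthogonal to the code thus has `Tr(x û(l)) = 0` for all `x`, hence `û(l) = 0` by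
nondegeneracy of the trace form: `u` lies in the code and `∑ u = 0`. Applied to a word
orthogonal to the extended code, shifted by its last coordinate, this puts the word back into
the extended code.
-/

open Finset

/-- The dual of a set of words: all words orthogonal (for the standard bilinear form)
to every word of the set. -/
def dualSet {F : Type*} [Field F] {N : ℕ} (C : Set (Fin N → F)) : Set (Fin N → F) :=
  {u | ∀ v ∈ C, ∑ k : Fin N, u k * v k = 0}

/-- The extended code of a code `C` of length `n`: each codeword is extended by the
coordinate `c_∞ = -∑_j c_j`. -/
def extendedCode {F : Type*} [Field F] {n : ℕ} (C : Set (Fin n → F)) :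
    Set (Fin (n + 1) → F) :=
  {x | ∃ c ∈ C, x = Fin.snoc c (-(∑ j : Fin n, c j))}

theorem qWeight_add_mul {q a : ℕ} (hq : 1 < q) (ha : a < q) (b : ℕ) :
    qWeight q (a + q * b) = a + qWeight q b := by
  by_cases h : a = 0 ∧ b = 0
  · simp [h.1, h.2, qWeight]
  · rw [qWeight, Nat.digits_add q hq a b ha (by tauto), List.sum_cons, qWeight]

theorem qWeight_of_lt_s15 {q a : ℕ} (hq : 1 < q) (ha : a < q) : qWeight q a = a := by
  simpa [qWeight] using qWeight_add_mul hq ha 0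

theorem qWeight_add_pow_mul {q m a : ℕ} (hq : 1 < q) (ha : a < q ^ m) (b : ℕ) :
    qWeight q (a + q ^ m * b) = qWeight q a + qWeight q b := by
  rcases eq_or_ne b 0 with rfl | hb
  · simp [qWeight]
  have hlen : (Nat.digits q a).length ≤ m := (Nat.digits_length_le_iff hq a).2 ha
  have := Nat.digits_append_zeroes_append_digits (k := m - (Nat.digits q a).length) hq
    (Nat.pos_of_ne_zero hb) (n := a)
  rw [Nat.add_sub_cancel' hlen] at this
  simp [qWeight, ← this]

theorem qWeight_add_qWeight_sub {q : ℕ} (hq : 1 < q) (m : ℕ) {k : ℕ} (hk : k < q ^ m) :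
    qWeight q k + qWeight q (q ^ m - 1 - k) = m * (q - 1) := by
  induction m generalizing k with
  | zero => simp_all [qWeight]
  | succ m ih =>
    obtain ⟨r, K, hr, rfl⟩ : ∃ r K, r < q ∧ k = r + q * K :=
      ⟨k % q, k / q, Nat.mod_lt k (by omega), (Nat.mod_add_div k q).symm⟩
    have hK : K < q ^ m := by
      rw [pow_succ'] at hk
      nlinarith
    have hsub : q ^ (m + 1) - 1 - (r + q * K) = (q - 1 - r) + q * (q ^ m - 1 - K) := by
      have : q * (q ^ m - 1 - K) + q * K + q = q ^ (m + 1) := by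
        rw [← mul_add, ← mul_add_one, pow_succ']; congr 1; omega
      omega
    rw [hsub, qWeight_add_mul hq hr, qWeight_add_mul hq (by omega : q - 1 - r < q),
      add_one_mul]
    have := ih hK
    omega

theorem mul_mod_pow_succ_sub_one {q m r d : ℕ} (hr : r < q ^ m) (hd : d < q)
    (hk : r + q ^ m * d < q ^ (m + 1) - 1) :
    q * (r + q ^ m * d) % (q ^ (m + 1) - 1) = d + q * r := by
  rw [pow_succ'] at hk ⊢
  generalize q ^ m = Q at *
  obtain ⟨N, hN⟩ : ∃ N, q * Q = N + 1 := ⟨q * Q - 1, by omega⟩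
  rw [hN, Nat.add_sub_cancel] at hk ⊢
  have hlt : d + q * r < N := by
    rcases Nat.lt_or_ge (r + 1) Q with hr' | hr'
    · nlinarith
    · have hdq : d + 1 < q := by
        by_contra!
        have : Q * (d + 1) = Q * q := by congr 1; omega
        nlinarith
      nlinarith
  have hexp : q * (r + Q * d) = (d + q * r) + d * N := by
    rw [mul_add, ← mul_assoc, hN]; ring
  rw [hexp, Nat.add_mul_mod_self_right, Nat.mod_eq_of_lt hlt]

theorem mul_mod_pow_sub_one_pos {q m k : ℕ} (hk0 : 0 < k) (hk : k < q ^ m - 1) :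
    0 < q * k % (q ^ m - 1) := by
  have hm : m ≠ 0 := by rintro rfl; simp at hk
  have hcop : Nat.Coprime q (q ^ m - 1) :=
    Nat.Coprime.coprime_dvd_left (dvd_pow_self q hm)
      ((Nat.coprime_self_sub_right (by omega)).2 (Nat.coprime_one_right _))
  refine Nat.pos_of_ne_zero fun h => Nat.not_dvd_of_pos_of_lt hk0 hk ?_
  exact (Nat.Coprime.dvd_of_dvd_mul_left hcop.symm (Nat.dvd_of_mod_eq_zero h))

theorem qWeight_mul_mod {q m k : ℕ} (hq : 1 < q) (hk : k < q ^ m - 1) :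
    qWeight q (q * k % (q ^ m - 1)) = qWeight q k := by
  obtain _ | m := m
  · simp at hk
  obtain ⟨r, d, hr, hd, rfl⟩ : ∃ r d, r < q ^ m ∧ d < q ∧ k = r + q ^ m * d := by
    refine ⟨k % q ^ m, k / q ^ m, Nat.mod_lt k (by positivity), ?_, (Nat.mod_add_div k _).symm⟩
    exact Nat.div_lt_of_lt_mul (by rw [← pow_succ]; omega)
  rw [mul_mod_pow_succ_sub_one hr hd hk, qWeight_add_mul hq hd, qWeight_add_pow_mul hq hr,
    qWeight_of_lt_s15 hq hd, add_comm]

theorem mem_Tset_iff_sub_notMem {q m j k : ℕ} (hq : 1 < q) (hqe : Even q) (hm : Odd m)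
    (hj : j = 0 ∨ j = 1) (hk0 : 0 < k) (hk : k < q ^ m - 1) :
    k ∈ Tset q m j ↔ q ^ m - 1 - k ∉ Tset q m j := by
  have hodd : Odd (qWeight q k + qWeight q (q ^ m - 1 - k)) := by
    rw [qWeight_add_qWeight_sub hq m (by omega : k < q ^ m)]
    exact hm.mul (Nat.Even.sub_odd hq.le hqe odd_one)
  rw [Nat.odd_iff] at hodd
  simp only [Tset, Set.mem_ofPred_eq]
  omega

theorem mul_mod_mem_Tset {q m j k : ℕ} (hq : 1 < q) (hk : k ∈ Tset q m j) :
    q * k % (q ^ m - 1) ∈ Tset q m j := by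
  obtain ⟨hk0, hk, hw⟩ := hk
  have hpos := mul_mod_pow_sub_one_pos (q := q) (m := m) hk0 (by omega)
  have hlt := Nat.mod_lt (q * k) (by omega : 0 < q ^ m - 1)
  exact ⟨hpos, by omega, by rw [qWeight_mul_mod hq (by omega), hw]⟩

section DefiningSet

variable {T : Set ℕ} {n q : ℕ}

theorem mul_pow_mod_mem (hT : ∀ k ∈ T, 0 < k ∧ k < n) (hTq : ∀ k ∈ T, q * k % n ∈ T)
    {l : ℕ} (hl : l ∈ T) (t : ℕ) : l * q ^ t % n ∈ T := by
  induction t with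
  | zero => rwa [pow_zero, mul_one, Nat.mod_eq_of_lt (hT l hl).2]
  | succ t ih =>
    have := hTq _ ih
    rwa [Nat.mul_mod_mod, ← mul_assoc, mul_comm q, mul_assoc, ← pow_succ'] at this

theorem not_dvd_mul_pow_add (hT : ∀ k ∈ T, 0 < k ∧ k < n) (hTneg : ∀ k ∈ T, n - k ∉ T)
    (hTq : ∀ k ∈ T, q * k % n ∈ T) {l k : ℕ} (hl : l = 0 ∨ l ∈ T) (hk : k ∈ T) (t : ℕ) :
    ¬ n ∣ l * q ^ t + k := by
  obtain ⟨hk0, hkn⟩ := hT k hk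
  rcases hl with rfl | hl
  · simpa using Nat.not_dvd_of_pos_of_lt hk0 hkn
  intro hdvd
  have hl' := mul_pow_mod_mem hT hTq hl t
  obtain ⟨hl0, hln⟩ := hT _ hl'
  have : n ∣ l * q ^ t % n + k := by
    rwa [← Nat.mod_add_div (l * q ^ t) n, add_right_comm, Nat.dvd_add_left (dvd_mul_right _ _)]
      at hdvd
  have := Nat.eq_of_dvd_of_lt_two_mul (by omega) this (by omega)
  exact hTneg _ hl' (by rwa [show n - l * q ^ t % n = k by omega])

end DefiningSet

theorem sum_mul_snoc {R : Type*} [NonUnitalNonAssocSemiring R] {n : ℕ} (u : Fin (n + 1) → R)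
    (c : Fin n → R) (x : R) :
    ∑ k, u k * (Fin.snoc c x : Fin (n + 1) → R) k =
      ∑ i, Fin.init u i * c i + u (Fin.last n) * x := by
  simp [Fin.sum_univ_castSucc, Fin.init]

theorem geom_sum_eq_zero_of_pow_eq_one {K : Type*} [DivisionRing K] {x : K} {n : ℕ}
    (hx : x ^ n = 1) (hx1 : x ≠ 1) : ∑ i ∈ range n, x ^ i = 0 := by
  rw [geom_sum_eq hx1, hx, sub_self, zero_div]

section MattsonSolomon

variable {F E : Type*} [Field F] [Field E] [Algebra F E] {n : ℕ} {β : E} {T : Set ℕ}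

def mattsonSolomon (β : E) (c : Fin n → F) (k : ℕ) : E :=
  ∑ j : Fin n, algebraMap F E (c j) * β ^ (k * (j : ℕ))

theorem mem_cyclicCode_iff {c : Fin n → F} :
    c ∈ cyclicCode F E n β T ↔ ∀ k ∈ T, mattsonSolomon β c k = 0 :=
  Iff.rfl

theorem mattsonSolomon_zero (c : Fin n → F) :
    mattsonSolomon β c 0 = algebraMap F E (∑ j, c j) := by
  simp [mattsonSolomon]

theorem sum_pow_mul_eq_zero (hβ : orderOf β = n) {a : ℕ} (ha : ¬ n ∣ a) :
    ∑ j : Fin n, β ^ (a * (j : ℕ)) = 0 := by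
  have hpow : (β ^ a) ^ n = 1 := by
    rw [← pow_mul, mul_comm, pow_mul, ← hβ, pow_orderOf_eq_one, one_pow]
  have hne : β ^ a ≠ 1 := by rwa [Ne, ← orderOf_dvd_iff_pow_eq_one, hβ]
  simp_rw [pow_mul]
  rw [Fin.sum_univ_eq_sum_range (fun j => (β ^ a) ^ j), geom_sum_eq_zero_of_pow_eq_one hpow hne]

theorem const_mem_cyclicCode (hβ : orderOf β = n) (hT : ∀ k ∈ T, 0 < k ∧ k < n) (a : F) :
    (fun _ : Fin n => a) ∈ cyclicCode F E n β T := fun k hk => by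
  rw [← mul_sum, sum_pow_mul_eq_zero hβ (Nat.not_dvd_of_pos_of_lt (hT k hk).1 (hT k hk).2),
    mul_zero]

theorem pow_sub_mul_eq_inv_pow (hβ : β ^ n = 1) {k : ℕ} (hk : k < n) (j : ℕ) :
    β ^ ((n - k) * j) = β⁻¹ ^ (k * j) := by
  have hβ0 : β ≠ 0 := ne_zero_pow (by omega) (hβ ▸ one_ne_zero)
  rw [Nat.sub_mul, pow_sub₀ β hβ0 (Nat.mul_le_mul_right j hk.le), pow_mul β n, hβ, one_pow,
    one_mul, inv_pow]

theorem sum_pow_mul_mul_inv_pow (hβ : orderOf β = n) (i j : Fin n) :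
    ∑ k ∈ range n, β ^ (k * (i : ℕ)) * β⁻¹ ^ (k * (j : ℕ)) =
      if i = j then (n : E) else 0 := by
  have hβn : β ^ n = 1 := hβ ▸ pow_orderOf_eq_one β
  have hβ0 : β ≠ 0 := ne_zero_pow i.pos.ne' (hβn ▸ one_ne_zero)
  simp_rw [mul_comm _ (i : ℕ), mul_comm _ (j : ℕ), pow_mul, ← mul_pow]
  split_ifs with hij
  · simp [hij, hβ0]
  · apply geom_sum_eq_zero_of_pow_eq_one
    · rw [mul_pow, pow_right_comm, hβn, one_pow, one_mul, pow_right_comm, inv_pow, hβn, inv_one,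
        one_pow]
    · rw [inv_pow, Ne, mul_inv_eq_one₀ (pow_ne_zero _ hβ0)]
      intro h
      exact hij (Fin.ext (pow_injOn_Iio_orderOf (by simp [hβ]) (by simp [hβ]) h))

theorem sum_mattsonSolomon_mul (hβ : orderOf β = n) (u v : Fin n → F) :
    ∑ k ∈ range n, mattsonSolomon β u k * mattsonSolomon β v (n - k) =
      n * algebraMap F E (∑ i, u i * v i) := by
  have hβn : β ^ n = 1 := hβ ▸ pow_orderOf_eq_one β
  calc ∑ k ∈ range n, mattsonSolomon β u k * mattsonSolomon β v (n - k)
      = ∑ k ∈ range n, ∑ i, ∑ j, algebraMap F E (u i) * algebraMap F E (v j) *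
          (β ^ (k * (i : ℕ)) * β⁻¹ ^ (k * (j : ℕ))) := by
        refine sum_congr rfl fun k hk => ?_
        rw [mattsonSolomon, mattsonSolomon, sum_mul_sum]
        refine sum_congr rfl fun i _ => sum_congr rfl fun j _ => ?_
        rw [pow_sub_mul_eq_inv_pow hβn (mem_range.1 hk)]
        ring
    _ = ∑ i, ∑ j, algebraMap F E (u i) * algebraMap F E (v j) *
          ∑ k ∈ range n, β ^ (k * (i : ℕ)) * β⁻¹ ^ (k * (j : ℕ)) := by
        rw [sum_comm]
        refine sum_congr rfl fun i _ => ?_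
        rw [sum_comm]
        simp_rw [mul_sum]
    _ = n * algebraMap F E (∑ i, u i * v i) := by
        simp_rw [sum_pow_mul_mul_inv_pow hβ, mul_ite, mul_zero, sum_ite_eq, mem_univ, if_true,
          map_sum, map_mul, mul_sum, mul_comm]

theorem mattsonSolomon_orderOf (hβ : orderOf β = n) (c : Fin n → F) :
    mattsonSolomon β c n = mattsonSolomon β c 0 := by
  simp only [mattsonSolomon, zero_mul, pow_zero, pow_mul, hβ ▸ pow_orderOf_eq_one β, one_pow]

theorem natCast_mul_sum_mul_eq_sum_mul_sum (hβ : orderOf β = n)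
    (hT : ∀ k, 0 < k → k < n → k ∈ T ∨ n - k ∈ T) {c c' : Fin n → F}
    (hc : c ∈ cyclicCode F E n β T) (hc' : c' ∈ cyclicCode F E n β T) :
    (n : F) * ∑ i, c i * c' i = (∑ i, c i) * ∑ i, c' i := by
  rcases Nat.eq_zero_or_pos n with rfl | hn
  · simp
  apply (algebraMap F E).injective
  have hvanish : ∀ k ∈ range n, k ≠ 0 →
      mattsonSolomon β c k * mattsonSolomon β c' (n - k) = 0 := by
    intro k hk hk0
    rcases hT k (Nat.pos_of_ne_zero hk0) (mem_range.1 hk) with hkT | hkT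
    · rw [mem_cyclicCode_iff.1 hc k hkT, zero_mul]
    · rw [mem_cyclicCode_iff.1 hc' _ hkT, mul_zero]
  rw [map_mul, map_natCast, ← sum_mattsonSolomon_mul hβ,
    sum_eq_single_of_mem 0 (mem_range.2 hn) hvanish, Nat.sub_zero, mattsonSolomon_orderOf hβ,
    mattsonSolomon_zero, mattsonSolomon_zero, map_mul]

theorem extendedCode_subset_dualSet (hβ : orderOf β = n) (hn : (n : F) = -1)
    (hT : ∀ k, 0 < k → k < n → k ∈ T ∨ n - k ∈ T) :
    extendedCode (cyclicCode F E n β T : Set (Fin n → F)) ⊆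
      dualSet (extendedCode (cyclicCode F E n β T : Set (Fin n → F))) := by
  rintro _ ⟨c, hc, rfl⟩ _ ⟨c', hc', rfl⟩
  have h := natCast_mul_sum_mul_eq_sum_mul_sum hβ hT hc hc'
  rw [hn] at h
  rw [sum_mul_snoc, Fin.init_snoc, Fin.snoc_last]
  linear_combination -h

end MattsonSolomon

section Dual

variable {F E : Type*} [Field F] [Field E] [Algebra F E] [Finite E] {n : ℕ} {β : E}
  {T : Set ℕ}

theorem trace_mem_cyclicCode (hβ : orderOf β = n) (hT : ∀ k ∈ T, 0 < k ∧ k < n)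
    (hTneg : ∀ k ∈ T, n - k ∉ T) (hTq : ∀ k ∈ T, Nat.card F * k % n ∈ T)
    {l : ℕ} (hl : l = 0 ∨ l ∈ T) (α : E) :
    (fun i : Fin n => Algebra.trace F E (α * β ^ (l * (i : ℕ)))) ∈ cyclicCode F E n β T := by
  intro k hk
  calc ∑ i : Fin n,
        algebraMap F E (Algebra.trace F E (α * β ^ (l * (i : ℕ)))) * β ^ (k * (i : ℕ))
      = ∑ t ∈ range (Module.finrank F E),
          α ^ Nat.card F ^ t * ∑ i : Fin n, β ^ ((l * Nat.card F ^ t + k) * (i : ℕ)) := by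
        simp_rw [FiniteField.algebraMap_trace_eq_sum_pow, sum_mul, mul_sum]
        rw [sum_comm]
        refine sum_congr rfl fun t _ => sum_congr rfl fun i _ => ?_
        rw [mul_pow, ← pow_mul, mul_assoc, ← pow_add]
        ring_nf
    _ = 0 := sum_eq_zero fun t _ => by
        rw [sum_pow_mul_eq_zero hβ (not_dvd_mul_pow_add hT hTneg hTq hl hk t), mul_zero]

theorem mattsonSolomon_eq_zero_of_mem_dual (hβ : orderOf β = n) (hT : ∀ k ∈ T, 0 < k ∧ k < n)
    (hTneg : ∀ k ∈ T, n - k ∉ T) (hTq : ∀ k ∈ T, Nat.card F * k % n ∈ T) {u : Fin n → F}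
    (hu : ∀ c ∈ cyclicCode F E n β T, ∑ i, u i * c i = 0) {l : ℕ} (hl : l = 0 ∨ l ∈ T) :
    mattsonSolomon β u l = 0 := by
  refine (traceForm_nondegenerate F E).1 _ fun α => ?_
  rw [Algebra.traceForm_apply, ← hu _ (trace_mem_cyclicCode hβ hT hTneg hTq hl α),
    mattsonSolomon, sum_mul, map_sum]
  refine sum_congr rfl fun i _ => ?_
  rw [mul_assoc, mul_comm _ α, ← Algebra.smul_def, LinearMap.map_smul, smul_eq_mul]

theorem dualSet_extendedCode_subset (hβ : orderOf β = n) (hn : (n : F) = -1)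
    (hT : ∀ k ∈ T, 0 < k ∧ k < n) (hTneg : ∀ k ∈ T, n - k ∉ T)
    (hTq : ∀ k ∈ T, Nat.card F * k % n ∈ T) :
    dualSet (extendedCode (cyclicCode F E n β T : Set (Fin n → F))) ⊆
      extendedCode (cyclicCode F E n β T : Set (Fin n → F)) := by
  intro u hu
  have hperp : ∀ c ∈ cyclicCode F E n β T,
      ∑ i, (Fin.init u i - u (Fin.last n)) * c i = 0 := fun c hc => by
    rw [← hu _ ⟨c, hc, rfl⟩, sum_mul_snoc]
    simp only [sub_mul, sum_sub_distrib, ← mul_sum]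
    ring
  have hv := fun l (hl : l = 0 ∨ l ∈ T) =>
    mattsonSolomon_eq_zero_of_mem_dual hβ hT hTneg hTq hperp hl
  have hsum : ∑ i, (Fin.init u i - u (Fin.last n)) = 0 :=
    (algebraMap F E).injective (by rw [← mattsonSolomon_zero, hv 0 (Or.inl rfl), map_zero])
  have hinit : Fin.init u ∈ cyclicCode F E n β T := by
    convert add_mem (mem_cyclicCode_iff.2 fun k hk => hv k (Or.inr hk))
      (const_mem_cyclicCode hβ hT (u (Fin.last n))) using 1
    ext i
    simp
  refine ⟨Fin.init u, hinit, ?_⟩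
  rw [sum_sub_distrib, sum_const, card_univ, Fintype.card_fin, nsmul_eq_mul, hn] at hsum
  rw [show -∑ i, Fin.init u i = u (Fin.last n) by linear_combination -hsum]
  exact (Fin.snoc_init_self u).symm

theorem extendedCode_cyclicCode_eq_dualSet (hβ : orderOf β = n) (hn : (n : F) = -1)
    (hT : ∀ k ∈ T, 0 < k ∧ k < n) (hTcompl : ∀ k, 0 < k → k < n → (k ∈ T ↔ n - k ∉ T))
    (hTq : ∀ k ∈ T, Nat.card F * k % n ∈ T) :
    extendedCode (cyclicCode F E n β T : Set (Fin n → F)) =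
      dualSet (extendedCode (cyclicCode F E n β T : Set (Fin n → F))) := by
  refine (extendedCode_subset_dualSet hβ hn fun k hk0 hk => ?_).antisymm
    (dualSet_extendedCode_subset hβ hn hT (fun k hk => ?_) hTq)
  · exact or_iff_not_imp_left.2 fun h => not_not.1 (mt (hTcompl k hk0 hk).2 h)
  · exact (hTcompl k (hT k hk).1 (hT k hk).2).1 hk

end Dual

theorem natCast_card_pow_sub_one {F : Type*} [Field F] [Fintype F] {m : ℕ} (hm : m ≠ 0) :
    ((Fintype.card F ^ m - 1 : ℕ) : F) = -1 := by
  rw [Nat.cast_sub (Nat.one_le_pow _ _ Fintype.card_pos), Nat.cast_pow,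
    FiniteField.cast_card_eq_zero, zero_pow hm, Nat.cast_one, zero_sub]

theorem stmt15_general (s q m n : ℕ) (hs : 1 ≤ s) (hq : q = 2 ^ s)
    (hmodd : Odd m) (hn : n = q ^ m - 1)
    (F E : Type*) [Field F] [Fintype F] [Field E] [Fintype E] [Algebra F E]
    (hF : Fintype.card F = q)
    (β : E) (hβ : orderOf β = n) :
    ∀ j : ℕ, j = 0 ∨ j = 1 →
      extendedCode (cyclicCode F E n β (Tset q m j) : Set (Fin n → F)) =
        dualSet (extendedCode (cyclicCode F E n β (Tset q m j) : Set (Fin n → F))) := by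
  intro j hj
  have hq1 : 1 < q := hq ▸ Nat.one_lt_two_pow (by omega)
  have hqe : Even q := hq ▸ (Nat.even_pow.2 ⟨even_two, by omega⟩)
  subst hn
  refine extendedCode_cyclicCode_eq_dualSet hβ (hF ▸ natCast_card_pow_sub_one hmodd.pos.ne')
    (fun k hk => ?_) (fun k hk0 hk => mem_Tset_iff_sub_notMem hq1 hqe hmodd hj hk0 hk)
    (fun k hk => ?_)
  · obtain ⟨hk0, hk, -⟩ := hk
    omega
  · rw [Nat.card_eq_fintype_card, hF]
    exact mul_mod_mem_Tset hq1 hk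

theorem stmt15 (s q m n : ℕ) (hs : 1 ≤ s) (hq : q = 2 ^ s)
    (hm : 3 ≤ m) (hmodd : Odd m) (hn : n = q ^ m - 1)
    (F E : Type*) [Field F] [Fintype F] [DecidableEq F] [Field E] [Fintype E] [Algebra F E]
    (hF : Fintype.card F = q) (hE : Fintype.card E = q ^ m)
    (β : E) (hβ : orderOf β = n) :
    ∀ j : ℕ, j = 0 ∨ j = 1 →
      extendedCode (cyclicCode F E n β (Tset q m j) : Set (Fin n → F)) =
        dualSet (extendedCode (cyclicCode F E n β (Tset q m j) : Set (Fin n → F))) :=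
  stmt15_general s q m n hs hq hmodd hn F E hF β hβ
end
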